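/- arXiv:2102.07053 — 6 statements merged into one kernel-verified Lean document; each statement's English description precedes it below -/
import Mathlib

section
/- Consider m clients with local objectives f_i and global objective f = (1/m)∑f_i, where each f_i is L-smooth and convex. Fix a point x̄ and η with 0 < η ≤ 1/L. Define iterates x_{i,0} = x̄ and x_{i,ℓ+1} = x_{i,ℓ} - η(∇f_i(x_{i,ℓ}) - ∇f_i(x̄) + ∇f(x̄)) for ℓ = 0,…,H-1. Then for every client i and every ℓ ∈ {0,…,H-1}, ‖x_{i,ℓ} - x̄‖ ≤ η·H·‖∇f(x̄)‖. -/
/-!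
For a convex function `f` with `K`-Lipschitz gradient, the first-order convexity inequality and
the descent lemma combine into cocoercivity,
`K⁻¹ ‖∇f y - ∇f x‖² ≤ ⟪∇f y - ∇f x, y - x⟫`, so the gradient step `y ↦ y - η ∇f y` is
nonexpansive for `0 ≤ η ≤ 2 / K`. A FedLin local step is such a gradient step, compared with
the one taken from `x̄`, followed by the shift `-η ∇f(x̄)`; so each local step moves the iterate
at most `η ‖∇f(x̄)‖` further away from `x̄`.
-/

open Set
open scoped NNReal RealInnerProductSpace

theorem le_add_mul_of_forall_lt_le_add {u : ℕ → ℝ} {c : ℝ} {N : ℕ}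
    (h : ∀ n < N, u (n + 1) ≤ u n + c) : ∀ n ≤ N, u n ≤ u 0 + n * c := by
  intro n hn
  induction n with
  | zero => simp
  | succ n ih =>
    push_cast
    linarith [h n hn, ih (Nat.le_of_succ_le hn)]

section Gradient

variable {E : Type*} [NormedAddCommGroup E] [InnerProductSpace ℝ E] [CompleteSpace E]
  {f : E → ℝ}

theorem HasGradientAt.hasDerivAt_comp_add_smul {g x v : E} {t : ℝ}
    (hf : HasGradientAt f g (x + t • v)) :
    HasDerivAt (fun s : ℝ => f (x + s • v)) ⟪g, v⟫ t := by
  have hline : HasDerivAt (fun s : ℝ => x + s • v) v t := by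
    simpa using ((hasDerivAt_id t).smul_const v).const_add x
  simpa [Function.comp_def] using
    (hasGradientAt_iff_hasFDerivAt.mp hf).comp_hasDerivAt t hline

theorem ConvexOn.add_inner_gradient_le (hconv : ConvexOn ℝ univ f) {x : E}
    (hf : DifferentiableAt ℝ f x) (y : E) : f x + ⟪gradient f x, y - x⟫ ≤ f y := by
  have hline : ConvexOn ℝ univ (fun t : ℝ => f (x + t • (y - x))) := by
    simpa [Function.comp_def, AffineMap.lineMap_apply, add_comm] using
      hconv.comp_affineMap (AffineMap.lineMap x y : ℝ →ᵃ[ℝ] E)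
  have hderiv : HasDerivAt (fun t : ℝ => f (x + t • (y - x))) ⟪gradient f x, y - x⟫ 0 :=
    HasGradientAt.hasDerivAt_comp_add_smul (by simpa using hf.hasGradientAt)
  have hslope := hline.le_slope_of_hasDerivAt (mem_univ 0) (mem_univ 1) one_pos hderiv
  simp only [slope_def_field, one_smul, add_sub_cancel, zero_smul, add_zero, sub_zero,
    div_one] at hslope
  linarith

theorem le_add_inner_gradient_add_of_lipschitzWith (hf : Differentiable ℝ f) {K : ℝ≥0}
    (hK : LipschitzWith K (gradient f)) (x y : E) :
    f y ≤ f x + ⟪gradient f x, y - x⟫ + K / 2 * ‖y - x‖ ^ 2 := by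
  set v := y - x
  let φ : ℝ → ℝ := fun t => f (x + t • v) - t * ⟪gradient f x, v⟫ - K / 2 * t ^ 2 * ‖v‖ ^ 2
  have hφ (t : ℝ) :
      HasDerivAt φ (⟪gradient f (x + t • v), v⟫ - ⟪gradient f x, v⟫ - K * t * ‖v‖ ^ 2) t := by
    have hquad := ((hasDerivAt_pow 2 t).const_mul (K / 2 : ℝ)).mul_const (‖v‖ ^ 2)
    refine (((hf (x + t • v)).hasGradientAt.hasDerivAt_comp_add_smul.sub
      ((hasDerivAt_id' t).mul_const _)).sub hquad).congr_deriv ?_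
    push_cast
    ring
  have hφ_anti : AntitoneOn φ (Ici 0) := by
    refine antitoneOn_of_hasDerivWithinAt_nonpos (convex_Ici 0)
      (fun t _ => (hφ t).continuousAt.continuousWithinAt) (fun t _ => (hφ t).hasDerivWithinAt) ?_
    rintro t ht
    rw [interior_Ici, mem_Ioi] at ht
    have hlip : ‖gradient f (x + t • v) - gradient f x‖ ≤ K * (t * ‖v‖) := by
      simpa [norm_smul, abs_of_pos ht] using hK.norm_sub_le (x + t • v) x
    have hcs := real_inner_le_norm (gradient f (x + t • v) - gradient f x) v
    rw [inner_sub_left] at hcs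
    nlinarith [norm_nonneg v]
  have hφ_le := hφ_anti self_mem_Ici (mem_Ici.mpr zero_le_one) zero_le_one
  simp only [φ, v, one_smul, add_sub_cancel, zero_smul, add_zero, zero_mul, one_pow, one_mul,
    mul_one, sub_zero, ne_eq, OfNat.ofNat_ne_zero, not_false_eq_true, zero_pow, mul_zero] at hφ_le ⊢
  linarith

theorem ConvexOn.add_inner_gradient_add_norm_sq_le (hconv : ConvexOn ℝ univ f)
    (hf : Differentiable ℝ f) {K : ℝ≥0} (hK : LipschitzWith K (gradient f)) (x y : E) :
    f x + ⟪gradient f x, y - x⟫ + (K : ℝ)⁻¹ / 2 * ‖gradient f y - gradient f x‖ ^ 2 ≤ f y := by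
  set g := gradient f y - gradient f x
  -- `z` is a gradient step from `y` for `f - ⟪gradient f x, ·⟫`, which is minimal at `x`.
  set z := y - (K : ℝ)⁻¹ • g
  have hlower := hconv.add_inner_gradient_le (hf x) z
  have hupper := le_add_inner_gradient_add_of_lipschitzWith hf hK y z
  have hzx : z - x = (y - x) - (K : ℝ)⁻¹ • g := sub_right_comm _ _ _
  have hzy : z - y = -((K : ℝ)⁻¹ • g) := sub_sub_cancel_left _ _
  have hg : ⟪gradient f y, g⟫ - ⟪gradient f x, g⟫ = ‖g‖ ^ 2 := by
    rw [← inner_sub_left, real_inner_self_eq_norm_sq]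
  have hK_inv : (K : ℝ) * (K : ℝ)⁻¹ ^ 2 = (K : ℝ)⁻¹ := by
    simpa [sq, mul_assoc] using inv_mul_mul_self (K : ℝ)⁻¹
  rw [hzx, inner_sub_right, real_inner_smul_right] at hlower
  rw [hzy, inner_neg_right, real_inner_smul_right, norm_neg, norm_smul, mul_pow,
    Real.norm_eq_abs, sq_abs] at hupper
  linear_combination hlower + hupper - (K : ℝ)⁻¹ * hg + ‖g‖ ^ 2 / 2 * hK_inv

-- For `K = 0` the junk value `(K : ℝ)⁻¹ = 0` makes this monotonicity of the gradient.
theorem ConvexOn.inv_mul_norm_sq_sub_gradient_le_inner (hconv : ConvexOn ℝ univ f)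
    (hf : Differentiable ℝ f) {K : ℝ≥0} (hK : LipschitzWith K (gradient f)) (x y : E) :
    (K : ℝ)⁻¹ * ‖gradient f y - gradient f x‖ ^ 2 ≤
      ⟪gradient f y - gradient f x, y - x⟫ := by
  have hxy := hconv.add_inner_gradient_add_norm_sq_le hf hK x y
  have hyx := hconv.add_inner_gradient_add_norm_sq_le hf hK y x
  rw [norm_sub_rev, ← neg_sub y x, inner_neg_right] at hyx
  rw [inner_sub_left]
  linarith

theorem ConvexOn.norm_sub_smul_sub_gradient_le (hconv : ConvexOn ℝ univ f)
    (hf : Differentiable ℝ f) {K : ℝ≥0} (hK : LipschitzWith K (gradient f)) {η : ℝ}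
    (hη₀ : 0 ≤ η) (hη : η ≤ 2 * (K : ℝ)⁻¹) (x y : E) :
    ‖y - x - η • (gradient f y - gradient f x)‖ ≤ ‖y - x‖ := by
  set g := gradient f y - gradient f x
  have hco := hconv.inv_mul_norm_sq_sub_gradient_le_inner hf hK x y
  refine (sq_le_sq₀ (norm_nonneg _) (norm_nonneg _)).mp ?_
  rw [norm_sub_sq_real, real_inner_smul_right, norm_smul, mul_pow, Real.norm_eq_abs, sq_abs,
    real_inner_comm]
  nlinarith [mul_le_mul_of_nonneg_left hco hη₀,
    mul_le_mul_of_nonneg_right hη (mul_nonneg hη₀ (sq_nonneg ‖g‖))]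

theorem ConvexOn.norm_corrected_gradient_step_sub_le (hconv : ConvexOn ℝ univ f)
    (hf : Differentiable ℝ f) {K : ℝ≥0} (hK : LipschitzWith K (gradient f)) {η : ℝ}
    (hη₀ : 0 ≤ η) (hη : η ≤ 2 * (K : ℝ)⁻¹) (x₀ y c : E) :
    ‖y - η • (gradient f y - gradient f x₀ + c) - x₀‖ ≤ ‖y - x₀‖ + η * ‖c‖ := calc
  _ = ‖(y - x₀ - η • (gradient f y - gradient f x₀)) - η • c‖ := by
    congr 1
    module
  _ ≤ ‖y - x₀ - η • (gradient f y - gradient f x₀)‖ + ‖η • c‖ := norm_sub_le _ _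
  _ ≤ ‖y - x₀‖ + η * ‖c‖ := by
    rw [norm_smul, Real.norm_of_nonneg hη₀]
    gcongr
    exact hconv.norm_sub_smul_sub_gradient_le hf hK hη₀ hη x₀ y

end Gradient

theorem fedlin_drift_bound_convex_general {d m H : ℕ}
    (f : Fin m → EuclideanSpace ℝ (Fin d) → ℝ)
    (F : EuclideanSpace ℝ (Fin d) → ℝ)
    (L η : ℝ)
    (hdiff : ∀ i, Differentiable ℝ (f i))
    (hsmooth : ∀ i, LipschitzWith L.toNNReal (gradient (f i)))
    (hconv : ∀ i, ConvexOn ℝ Set.univ (f i))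
    (hη : 0 < η) (hη' : η ≤ 1 / L)
    (xbar : EuclideanSpace ℝ (Fin d))
    (x : Fin m → ℕ → EuclideanSpace ℝ (Fin d))
    (hx0 : ∀ i, x i 0 = xbar)
    (hrec : ∀ i, ∀ ℓ < H, x i (ℓ + 1) =
      x i ℓ - η • (gradient (f i) (x i ℓ) - gradient (f i) xbar + gradient F xbar)) :
    ∀ i, ∀ ℓ < H, ‖x i ℓ - xbar‖ ≤ η * H * ‖gradient F xbar‖ := by
  intro i ℓ hℓ
  have hL : 0 < L := one_div_pos.mp (hη.trans_le hη')
  have hη₂ : η ≤ 2 * (L.toNNReal : ℝ)⁻¹ := by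
    rw [Real.coe_toNNReal L hL.le, ← one_div]
    linarith [one_div_pos.mpr hL]
  have hstep : ∀ n < H, ‖x i (n + 1) - xbar‖ ≤ ‖x i n - xbar‖ + η * ‖gradient F xbar‖ :=
    fun n hn => hrec i n hn ▸ (hconv i).norm_corrected_gradient_step_sub_le (hdiff i)
      (hsmooth i) hη.le hη₂ xbar (x i n) (gradient F xbar)
  calc ‖x i ℓ - xbar‖ ≤ ℓ * (η * ‖gradient F xbar‖) := by
        simpa [hx0] using
          le_add_mul_of_forall_lt_le_add (u := fun n => ‖x i n - xbar‖) hstep ℓ hℓ.le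
    _ ≤ H * (η * ‖gradient F xbar‖) := by gcongr
    _ = η * H * ‖gradient F xbar‖ := by ring

/-- Drift bound for FedLin local iterates with convex smooth clients:
`‖x_{i,ℓ} - x̄‖ ≤ η H ‖∇f(x̄)‖` for all `ℓ ∈ {0,…,H-1}`. -/
theorem fedlin_drift_bound_convex {d m H : ℕ} (hm : 0 < m)
    (f : Fin m → EuclideanSpace ℝ (Fin d) → ℝ)
    (F : EuclideanSpace ℝ (Fin d) → ℝ)
    (hF : ∀ z, F z = (1 / (m : ℝ)) * ∑ i, f i z)
    (L η : ℝ) (hL : 0 < L)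
    (hdiff : ∀ i, Differentiable ℝ (f i))
    (hsmooth : ∀ i, LipschitzWith L.toNNReal (gradient (f i)))
    (hconv : ∀ i, ConvexOn ℝ Set.univ (f i))
    (hη : 0 < η) (hη' : η ≤ 1 / L)
    (xbar : EuclideanSpace ℝ (Fin d))
    (x : Fin m → ℕ → EuclideanSpace ℝ (Fin d))
    (hx0 : ∀ i, x i 0 = xbar)
    (hrec : ∀ i, ∀ ℓ < H, x i (ℓ + 1) =
      x i ℓ - η • (gradient (f i) (x i ℓ) - gradient (f i) xbar + gradient F xbar)) :
    ∀ i, ∀ ℓ < H, ‖x i ℓ - xbar‖ ≤ η * H * ‖gradient F xbar‖ :=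
  fedlin_drift_bound_convex_general f F L η hdiff hsmooth hconv hη hη' xbar x hx0 hrec
end

section
/- Consider m clients with L-smooth local objectives f_i (no convexity assumed). Fix x̄ and a client i with step size η_i ≤ 1/(L·τ_i), and define x_{i,0} = x̄ and x_{i,ℓ+1} = x_{i,ℓ} - η_i(∇f_i(x_{i,ℓ}) - ∇f_i(x̄) + ∇f(x̄)) for ℓ = 0,…,τ_i - 1, where f = (1/m)∑f_j. Then for every ℓ ∈ {0,…,τ_i - 1}, ‖x_{i,ℓ} - x̄‖ ≤ 3·η_i·τ_i·‖∇f(x̄)‖. -/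
/-- Drift bound for FedLin local iterates with (possibly non-convex) smooth clients:
for client `i` performing `τᵢ` local steps with step size `ηᵢ ≤ 1/(L τᵢ)`,
`‖x_{i,ℓ} - x̄‖ ≤ 3 ηᵢ τᵢ ‖∇f(x̄)‖` for all `ℓ ∈ {0,…,τᵢ-1}`. -/
theorem fedlin_drift_bound_nonconvex {d m : ℕ} (hm : 0 < m)
    (f : Fin m → EuclideanSpace ℝ (Fin d) → ℝ)
    (F : EuclideanSpace ℝ (Fin d) → ℝ)
    (hF : ∀ z, F z = (1 / (m : ℝ)) * ∑ j, f j z)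
    (L : ℝ) (hL : 0 < L)
    (hdiff : ∀ j, Differentiable ℝ (f j))
    (hsmooth : ∀ j, LipschitzWith L.toNNReal (gradient (f j)))
    (i : Fin m) (τ : ℕ) (hτ : 1 ≤ τ)
    (η : ℝ) (hη : 0 < η) (hη' : η ≤ 1 / (L * τ))
    (xbar : EuclideanSpace ℝ (Fin d))
    (x : ℕ → EuclideanSpace ℝ (Fin d))
    (hx0 : x 0 = xbar)
    (hrec : ∀ ℓ < τ, x (ℓ + 1) =
      x ℓ - η • (gradient (f i) (x ℓ) - gradient (f i) xbar + gradient F xbar)) :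
    ∀ ℓ < τ, ‖x ℓ - xbar‖ ≤ 3 * η * τ * ‖gradient F xbar‖ := by
  set g := gradient F xbar with hg
  have hτpos : (0:ℝ) < τ := by exact_mod_cast hτ
  have hηL : η * L ≤ 1 / τ := by
    have h := mul_le_mul_of_nonneg_right hη' hL.le
    have he : 1 / (L * (τ:ℝ)) * L = 1 / (τ:ℝ) := by
      field_simp
    linarith [he ▸ h]
  have hbase : (1:ℝ) ≤ 1 + η * L := by nlinarith
  -- main induction
  have key : ∀ ℓ, ℓ ≤ τ → ‖x ℓ - xbar‖ ≤ η * ℓ * (1 + η * L) ^ ℓ * ‖g‖ := by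
    intro ℓ
    induction ℓ with
    | zero => intro _; simp [hx0]
    | succ n ih =>
      intro hn
      have hnτ : n < τ := hn
      have ihn := ih (le_of_lt hnτ)
      have hstep : ‖x (n+1) - xbar‖ ≤ (1 + η * L) * ‖x n - xbar‖ + η * ‖g‖ := by
        rw [hrec n hnτ]
        have h1 : x n - η • (gradient (f i) (x n) - gradient (f i) xbar + g) - xbar
            = (x n - xbar) - η • (gradient (f i) (x n) - gradient (f i) xbar) - η • g := by
          rw [smul_add]; abel
        rw [h1]
        have hlip : ‖gradient (f i) (x n) - gradient (f i) xbar‖ ≤ L * ‖x n - xbar‖ := by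
          have := (hsmooth i).dist_le_mul (x n) xbar
          simpa [dist_eq_norm, Real.coe_toNNReal L hL.le] using this
        calc ‖(x n - xbar) - η • (gradient (f i) (x n) - gradient (f i) xbar) - η • g‖
            ≤ ‖(x n - xbar) - η • (gradient (f i) (x n) - gradient (f i) xbar)‖ + ‖η • g‖ :=
              norm_sub_le _ _
          _ ≤ ‖x n - xbar‖ + ‖η • (gradient (f i) (x n) - gradient (f i) xbar)‖ + ‖η • g‖ := by
              have := norm_sub_le (x n - xbar) (η • (gradient (f i) (x n) - gradient (f i) xbar))
              linarith
          _ ≤ ‖x n - xbar‖ + η * (L * ‖x n - xbar‖) + η * ‖g‖ := by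
              rw [norm_smul, norm_smul, Real.norm_of_nonneg hη.le]
              gcongr
          _ = (1 + η * L) * ‖x n - xbar‖ + η * ‖g‖ := by ring
      have hpow1 : (1:ℝ) ≤ (1 + η * L) ^ (n+1) := one_le_pow₀ hbase
      calc ‖x (n+1) - xbar‖ ≤ (1 + η * L) * ‖x n - xbar‖ + η * ‖g‖ := hstep
        _ ≤ (1 + η * L) * (η * n * (1 + η * L) ^ n * ‖g‖) + η * ‖g‖ := by
            have := mul_le_mul_of_nonneg_left ihn (show (0:ℝ) ≤ 1 + η * L by linarith)
            linarith
        _ = η * n * (1 + η * L) ^ (n+1) * ‖g‖ + η * 1 * ‖g‖ := by ring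
        _ ≤ η * n * (1 + η * L) ^ (n+1) * ‖g‖ + η * (1 + η * L) ^ (n+1) * ‖g‖ := by
            have h := mul_le_mul_of_nonneg_left hpow1 hη.le
            have h2 := mul_le_mul_of_nonneg_right h (norm_nonneg g)
            linarith
        _ = η * (n+1 : ℕ) * (1 + η * L) ^ (n+1) * ‖g‖ := by push_cast; ring
  -- bound the growth factor by 3
  have hexp : (1 + η * L) ^ τ ≤ 3 := by
    have h1 : (1 + η * L) ^ τ ≤ (1 + 1/τ) ^ τ := by
      gcongr <;> linarith
    have h2 : (1 + 1/τ : ℝ) ≤ Real.exp (1/τ) := by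
      have := Real.add_one_le_exp (1/τ : ℝ)
      linarith
    have h3 : (1 + 1/τ : ℝ) ^ τ ≤ Real.exp (1/τ) ^ τ := by
      gcongr <;> positivity
    have h4 : Real.exp (1/τ : ℝ) ^ τ = Real.exp 1 := by
      rw [← Real.exp_nat_mul]
      congr 1
      field_simp
    have h5 : Real.exp 1 ≤ 3 := by
      have := Real.exp_one_lt_d9
      linarith
    calc (1 + η * L) ^ τ ≤ (1 + 1/τ) ^ τ := h1
      _ ≤ Real.exp (1/τ) ^ τ := h3
      _ = Real.exp 1 := h4
      _ ≤ 3 := h5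
  intro ℓ hℓ
  have := key ℓ (le_of_lt hℓ)
  have hℓτ : (ℓ:ℝ) ≤ τ := by exact_mod_cast hℓ.le
  have hpowmono : (1 + η * L) ^ ℓ ≤ (1 + η * L) ^ τ :=
    pow_le_pow_right₀ hbase hℓ.le
  have hgn : 0 ≤ ‖g‖ := norm_nonneg _
  calc ‖x ℓ - xbar‖ ≤ η * ℓ * (1 + η * L) ^ ℓ * ‖g‖ := this
    _ ≤ η * τ * 3 * ‖g‖ := by
        have h1 : (1 + η * L) ^ ℓ ≤ 3 := le_trans hpowmono hexp
        gcongr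
    _ = 3 * η * τ * ‖g‖ := by ring
end

section
/- Suppose each f_i : ℝ^d → ℝ is L-smooth, f = (1/m)∑f_i, and for each round t the FedLin update with common step size η and H local steps produces x̄_{t+1} = x̄_t - (η/m)∑_{i=1}^m ∑_{ℓ=0}^{H-1} ∇f_i(x_{i,ℓ}), where x_{i,0} = x̄_t and x_{i,ℓ+1} = x_{i,ℓ} - η(∇f_i(x_{i,ℓ}) - ∇f_i(x̄_t) + ∇f(x̄_t)). Then f(x̄_{t+1}) - f(x̄_t) ≤ -ηH(1 - ηLH)‖∇f(x̄_t)‖² + (ηL/m)(∑_i ∑_ℓ ‖x_{i,ℓ} - x̄_t‖)‖∇f(x̄_t)‖ + (η²L³H/m)∑_i ∑_ℓ ‖x_{i,ℓ} - x̄_t‖². -/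
/-
Apply the descent lemma `F y - F x ≤ ⟪∇F x, y - x⟫ + L/2 ‖y - x‖²` at `x̄` with `y = x̄_{t+1}`.
Because `∇F = (1/m) ∑ ∇f_i`, the local gradients sum to `S + m H ∇F(x̄)` with
`S = ∑_i ∑_ℓ (∇f_i(x_{i,ℓ}) - ∇f_i(x̄))`, so the step is `-(η/m) S - η H ∇F(x̄)`.
The inner-product term then contributes `-η H ‖∇F(x̄)‖²` and a cross term controlled by
`‖S‖ ≤ L ∑_i ∑_ℓ ‖x_{i,ℓ} - x̄‖`; the quadratic term is split by `‖a + b‖² ≤ 2‖a‖² + 2‖b‖²`,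
and `‖S‖²` is bounded by Cauchy–Schwarz over the `m H` pairs `(i, ℓ)`.
-/

open Finset InnerProductSpace
open scoped NNReal

theorem LipschitzWith.norm_sum_sub_le {ι E F : Type*} [SeminormedAddCommGroup E]
    [SeminormedAddCommGroup F] {g : ι → E → F} {K : ℝ≥0} (hg : ∀ i, LipschitzWith K (g i))
    (s : Finset ι) (y : ι → E) (z : E) :
    ‖∑ i ∈ s, (g i (y i) - g i z)‖ ≤ K * ∑ i ∈ s, ‖y i - z‖ := by
  rw [mul_sum]
  exact (norm_sum_le _ _).trans (sum_le_sum fun i _ => (hg i).norm_sub_le _ _)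

theorem LipschitzWith.average {ι E F : Type*} [Fintype ι] [SeminormedAddCommGroup E]
    [SeminormedAddCommGroup F] [NormedSpace ℝ F] {g : ι → E → F} {K : ℝ≥0}
    (hg : ∀ i, LipschitzWith K (g i)) :
    LipschitzWith K fun z => (1 / (Fintype.card ι : ℝ)) • ∑ i, g i z := by
  refine lipschitzWith_iff_norm_sub_le.2 fun a b => ?_
  rw [← smul_sub, ← sum_sub_distrib, norm_smul]
  calc ‖1 / (Fintype.card ι : ℝ)‖ * ‖∑ i, (g i a - g i b)‖
      ≤ 1 / (Fintype.card ι : ℝ) * (K * ∑ _i : ι, ‖a - b‖) := by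
        rw [Real.norm_of_nonneg (by positivity)]
        gcongr
        exact LipschitzWith.norm_sum_sub_le hg univ (fun _ => a) b
    _ = K * ‖a - b‖ * (Fintype.card ι / Fintype.card ι) := by
        rw [sum_const, card_univ, nsmul_eq_mul]; ring
    _ ≤ K * ‖a - b‖ := mul_le_of_le_one_right (by positivity) (div_self_le_one _)

theorem sq_sum_sum_le_card_mul_sum_sum_sq {ι κ α : Type*} [Semiring α] [LinearOrder α]
    [IsStrictOrderedRing α] [ExistsAddOfLE α] (s : Finset ι) (t : Finset κ) (a : ι → κ → α) :
    (∑ i ∈ s, ∑ j ∈ t, a i j) ^ 2 ≤ (#s * #t) * ∑ i ∈ s, ∑ j ∈ t, a i j ^ 2 := by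
  simpa [sum_product, card_product] using
    sq_sum_le_card_mul_sum_sq (s := s ×ˢ t) (f := fun p => a p.1 p.2)

theorem sum_sum_eq_sum_sum_sub_add_smul_mean {ι κ E : Type*} [Fintype ι] [AddCommGroup E]
    [Module ℝ E] (hι : Fintype.card ι ≠ 0) (t : Finset κ) (u : ι → κ → E) (v : ι → E) :
    ∑ i, ∑ j ∈ t, u i j = ∑ i, ∑ j ∈ t, (u i j - v i)
      + ((#t : ℝ) * Fintype.card ι) • ((1 / (Fintype.card ι : ℝ)) • ∑ i, v i) := by
  have hcard : (Fintype.card ι : ℝ) ≠ 0 := Nat.cast_ne_zero.2 hι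
  rw [smul_smul, mul_assoc, mul_one_div_cancel hcard, mul_one]
  simp [sum_sub_distrib, smul_sum, Nat.cast_smul_eq_nsmul]

section InnerProductSpace

variable {E : Type*} [NormedAddCommGroup E] [InnerProductSpace ℝ E]

theorem inner_neg_smul_add_smul_add_norm_sq_le (G S : E) {p q L : ℝ} (hp : 0 ≤ p) (hL : 0 ≤ L) :
    ⟪G, -(p • S + q • G)⟫_ℝ + L / 2 * ‖-(p • S + q • G)‖ ^ 2
      ≤ -q * ‖G‖ ^ 2 + p * ‖G‖ * ‖S‖ + L * p ^ 2 * ‖S‖ ^ 2 + L * q ^ 2 * ‖G‖ ^ 2 := by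
  have hinner : ⟪G, -(p • S + q • G)⟫_ℝ = -(p * ⟪G, S⟫_ℝ) - q * ‖G‖ ^ 2 := by
    rw [inner_neg_right, inner_add_right, real_inner_smul_right, real_inner_smul_right,
      real_inner_self_eq_norm_sq]
    ring
  have hGS : -⟪G, S⟫_ℝ ≤ ‖G‖ * ‖S‖ := (neg_le_abs _).trans (abs_real_inner_le_norm G S)
  have hnorm : ‖-(p • S + q • G)‖ ^ 2 ≤ 2 * ((p * ‖S‖) ^ 2 + (q * ‖G‖) ^ 2) := by
    calc ‖-(p • S + q • G)‖ ^ 2 ≤ (‖p • S‖ + ‖q • G‖) ^ 2 := by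
          rw [norm_neg]; gcongr; exact norm_add_le _ _
      _ ≤ 2 * (‖p • S‖ ^ 2 + ‖q • G‖ ^ 2) := add_sq_le
      _ = 2 * ((p * ‖S‖) ^ 2 + (q * ‖G‖) ^ 2) := by
        simp only [norm_smul, mul_pow, Real.norm_eq_abs, sq_abs]
  rw [hinner]
  nlinarith [mul_le_mul_of_nonneg_left hGS hp, mul_le_mul_of_nonneg_left hnorm hL]

variable [CompleteSpace E]

theorem sub_le_inner_gradient_add_of_lipschitzWith {F : E → ℝ} {K : ℝ≥0}
    (hF : Differentiable ℝ F) (hK : LipschitzWith K (gradient F)) (x y : E) :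
    F y - F x ≤ ⟪gradient F x, y - x⟫_ℝ + K / 2 * ‖y - x‖ ^ 2 := by
  set v := y - x
  set φ : ℝ → ℝ := fun t => F (x + t • v) - t * ⟪gradient F x, v⟫_ℝ - K / 2 * t ^ 2 * ‖v‖ ^ 2
  have hφ : ∀ t, HasDerivAt φ
      (⟪gradient F (x + t • v) - gradient F x, v⟫_ℝ - K * t * ‖v‖ ^ 2) t := by
    intro t
    have hline : HasDerivAt (fun t : ℝ => x + t • v) v t := by
      simpa using ((hasDerivAt_id t).smul_const v).const_add x
    have hFline := (hF _).hasGradientAt.hasFDerivAt.comp_hasDerivAt t hline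
    rw [toDual_apply_apply] at hFline
    refine ((hFline.sub ((hasDerivAt_id t).mul_const _)).sub
      (((hasDerivAt_pow 2 t).const_mul (K / 2 : ℝ)).mul_const (‖v‖ ^ 2))).congr_deriv ?_
    rw [inner_sub_left]
    ring
  have hanti : AntitoneOn φ (Set.Icc 0 1) := by
    refine antitoneOn_of_deriv_nonpos (convex_Icc 0 1)
      (fun t _ => (hφ t).continuousAt.continuousWithinAt)
      (fun t _ => (hφ t).differentiableAt.differentiableWithinAt) fun t ht => ?_
    rw [interior_Icc] at ht
    rw [(hφ t).deriv, sub_nonpos]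
    calc ⟪gradient F (x + t • v) - gradient F x, v⟫_ℝ
        ≤ ‖gradient F (x + t • v) - gradient F x‖ * ‖v‖ := real_inner_le_norm _ _
      _ ≤ K * ‖(x + t • v) - x‖ * ‖v‖ := by gcongr; exact hK.norm_sub_le _ _
      _ = K * t * ‖v‖ ^ 2 := by
        rw [add_sub_cancel_left, norm_smul, Real.norm_of_nonneg ht.1.le]; ring
  have h01 := hanti (Set.left_mem_Icc.2 zero_le_one) (Set.right_mem_Icc.2 zero_le_one) zero_le_one
  simp only [φ, zero_smul, add_zero, one_smul, v, add_sub_cancel] at h01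
  linarith

theorem hasGradientAt_const_mul_sum {ι : Type*} {f : ι → E → ℝ} {z : E} (s : Finset ι)
    (hf : ∀ i ∈ s, DifferentiableAt ℝ (f i) z) (c : ℝ) :
    HasGradientAt (fun z => c * ∑ i ∈ s, f i z) (c • ∑ i ∈ s, gradient (f i) z) z := by
  rw [hasGradientAt_iff_hasFDerivAt, map_smul, map_sum]
  simp_rw [toDual_gradient]
  exact (HasFDerivAt.fun_sum fun i hi => (hf i hi).hasFDerivAt).const_mul c

theorem sub_le_of_sub_eq_neg_smul_add_smul_gradient {F : E → ℝ} {K : ℝ≥0}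
    (hF : Differentiable ℝ F) (hK : LipschitzWith K (gradient F)) {x y S : E} {p q : ℝ}
    (hp : 0 ≤ p) (hxy : y - x = -(p • S + q • gradient F x)) :
    F y - F x ≤ -q * ‖gradient F x‖ ^ 2 + p * ‖gradient F x‖ * ‖S‖ + K * p ^ 2 * ‖S‖ ^ 2
      + K * q ^ 2 * ‖gradient F x‖ ^ 2 :=
  (sub_le_inner_gradient_add_of_lipschitzWith hF hK x y).trans <| hxy ▸
    inner_neg_smul_add_smul_add_norm_sq_le _ _ hp K.coe_nonneg

end InnerProductSpace

theorem fedlin_descent_bound_general {d m H : ℕ} (hm : 0 < m)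
    (f : Fin m → EuclideanSpace ℝ (Fin d) → ℝ)
    (F : EuclideanSpace ℝ (Fin d) → ℝ)
    (hF : ∀ z, F z = (1 / (m : ℝ)) * ∑ i, f i z)
    (L η : ℝ) (hL : 0 < L) (hη : 0 < η)
    (hdiff : ∀ i, Differentiable ℝ (f i))
    (hsmooth : ∀ i, LipschitzWith L.toNNReal (gradient (f i)))
    (xbar xnext : EuclideanSpace ℝ (Fin d))
    (x : Fin m → ℕ → EuclideanSpace ℝ (Fin d))
    (hnext : xnext = xbar - (η / (m : ℝ)) •
      ∑ i, ∑ ℓ ∈ Finset.range H, gradient (f i) (x i ℓ)) :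
    F xnext - F xbar ≤
      -(η * H * (1 - η * L * H)) * ‖gradient F xbar‖ ^ 2
      + (η * L / (m : ℝ)) * (∑ i, ∑ ℓ ∈ Finset.range H, ‖x i ℓ - xbar‖) * ‖gradient F xbar‖
      + (η ^ 2 * L ^ 3 * H / (m : ℝ)) * ∑ i, ∑ ℓ ∈ Finset.range H, ‖x i ℓ - xbar‖ ^ 2 := by
  have hLK : (L.toNNReal : ℝ) = L := Real.coe_toNNReal L hL.le
  have hm' : (m : ℝ) ≠ 0 := by positivity
  have hFdiff : Differentiable ℝ F := by rw [funext hF]; fun_prop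
  have hgradF : gradient F = fun z => (1 / (m : ℝ)) • ∑ i, gradient (f i) z := by
    rw [funext hF]
    exact funext fun z =>
      (hasGradientAt_const_mul_sum univ (fun i _ => (hdiff i).differentiableAt) _).gradient
  have hFlip : LipschitzWith L.toNNReal (gradient F) := by
    rw [hgradF]; simpa using LipschitzWith.average hsmooth
  set G := gradient F xbar
  set S := ∑ i, ∑ ℓ ∈ range H, (gradient (f i) (x i ℓ) - gradient (f i) xbar)
  set A := ∑ i, ∑ ℓ ∈ range H, ‖x i ℓ - xbar‖
  set B := ∑ i, ∑ ℓ ∈ range H, ‖x i ℓ - xbar‖ ^ 2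
  have hstep : xnext - xbar = -((η / m) • S + (η * H) • G) := by
    have hsum := sum_sum_eq_sum_sum_sub_add_smul_mean (by simpa using hm.ne') (range H)
      (fun i ℓ => gradient (f i) (x i ℓ)) fun i => gradient (f i) xbar
    simp only [Fintype.card_fin, card_range, ← congrFun hgradF xbar] at hsum
    rw [hnext, hsum, smul_add, smul_smul, show η / m * (H * m) = η * H by field_simp]
    abel
  have hS : ‖S‖ ≤ L * A := by
    have h := LipschitzWith.norm_sum_sub_le (g := fun p : Fin m × ℕ => gradient (f p.1))
      (fun p => hsmooth p.1) (univ ×ˢ range H) (fun p => x p.1 p.2) xbar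
    rwa [sum_product, sum_product, hLK] at h
  have hS2 : ‖S‖ ^ 2 ≤ L ^ 2 * ((m * H) * B) := by
    calc ‖S‖ ^ 2 ≤ (L * A) ^ 2 := by gcongr
      _ ≤ L ^ 2 * ((m * H) * B) := by
        rw [mul_pow]; gcongr
        simpa using sq_sum_sum_le_card_mul_sum_sum_sq univ (range H) fun i ℓ => ‖x i ℓ - xbar‖
  calc F xnext - F xbar
      ≤ -(η * H) * ‖G‖ ^ 2 + η / m * ‖G‖ * ‖S‖ + L * (η / m) ^ 2 * ‖S‖ ^ 2
          + L * (η * H) ^ 2 * ‖G‖ ^ 2 := by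
        simpa only [hLK] using
          sub_le_of_sub_eq_neg_smul_add_smul_gradient hFdiff hFlip (by positivity) hstep
    _ ≤ -(η * H) * ‖G‖ ^ 2 + η / m * ‖G‖ * (L * A) + L * (η / m) ^ 2 * (L ^ 2 * ((m * H) * B))
          + L * (η * H) ^ 2 * ‖G‖ ^ 2 := by gcongr
    _ = _ := by field_simp; ring

/-- Per-round descent bound for FedLin (Lemma 4 of the paper). -/
theorem fedlin_descent_bound {d m H : ℕ} (hm : 0 < m)
    (f : Fin m → EuclideanSpace ℝ (Fin d) → ℝ)
    (F : EuclideanSpace ℝ (Fin d) → ℝ)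
    (hF : ∀ z, F z = (1 / (m : ℝ)) * ∑ i, f i z)
    (L η : ℝ) (hL : 0 < L) (hη : 0 < η)
    (hdiff : ∀ i, Differentiable ℝ (f i))
    (hsmooth : ∀ i, LipschitzWith L.toNNReal (gradient (f i)))
    (xbar xnext : EuclideanSpace ℝ (Fin d))
    (x : Fin m → ℕ → EuclideanSpace ℝ (Fin d))
    (hx0 : ∀ i, x i 0 = xbar)
    (hrec : ∀ i, ∀ ℓ < H, x i (ℓ + 1) =
      x i ℓ - η • (gradient (f i) (x i ℓ) - gradient (f i) xbar + gradient F xbar))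
    (hnext : xnext = xbar - (η / (m : ℝ)) •
      ∑ i, ∑ ℓ ∈ Finset.range H, gradient (f i) (x i ℓ)) :
    F xnext - F xbar ≤
      -(η * H * (1 - η * L * H)) * ‖gradient F xbar‖ ^ 2
      + (η * L / (m : ℝ)) * (∑ i, ∑ ℓ ∈ Finset.range H, ‖x i ℓ - xbar‖) * ‖gradient F xbar‖
      + (η ^ 2 * L ^ 3 * H / (m : ℝ)) * ∑ i, ∑ ℓ ∈ Finset.range H, ‖x i ℓ - xbar‖ ^ 2 :=
  fedlin_descent_bound_general hm f F hF L η hL hη hdiff hsmooth xbar xnext x hnext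
end

section
/- Suppose each f_i is L-smooth and μ-strongly convex, client i performs τ_i ≥ 1 local FedLin steps per round with client-specific step size η_i = 1/(6Lτ_i), and there is no compression. Then after T rounds, f(x̄_{T+1}) - f(x*) ≤ (1 - 1/(6κ))^T (f(x̄₁) - f(x*)), where κ = L/μ and x* minimizes f = (1/m)∑f_i; in particular the rate is independent of the τ_i. -/
/-!
Because `ηᵢ τᵢ = 1 / (6L)` for every client, unrolling the `τᵢ` corrected local steps gives
`xᵢ,τᵢ = x̄ₜ - (1 / (6L)) ∇f(x̄ₜ) - eᵢ`, where `eᵢ = ηᵢ ∑ₗ (∇fᵢ(xᵢ,ₗ) - ∇fᵢ(x̄ₜ))` is the client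
drift. By `L`-smoothness, `L ‖xᵢ,ₗ - x̄ₜ‖ ≤ ((1 + ηᵢL)^ℓ - 1) ‖∇f(x̄ₜ)‖`, and
`(1 + 1 / (6τᵢ))^τᵢ ≤ e^{1/6} ≤ 6/5` bounds this by `‖∇f(x̄ₜ)‖ / 5` whatever `τᵢ` is, so
`‖eᵢ‖ ≤ ‖∇f(x̄ₜ)‖ / (30L)`. Hence `x̄ₜ₊₁` is a gradient step of length `1 / (6L)` perturbed by at
most that much, the descent lemma gives `f(x̄ₜ₊₁) ≤ f(x̄ₜ) - ‖∇f(x̄ₜ)‖² / (12L)`, and the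
Polyak–Łojasiewicz inequality `‖∇f‖² ≥ 2μ (f - f(x*))` turns this into the factor `1 - μ / (6L)`.
-/

open Finset RealInnerProductSpace

section InnerProductSpace

variable {E : Type*} [NormedAddCommGroup E] [InnerProductSpace ℝ E]

theorem le_add_inner_gradient_add_sq_of_lipschitz [CompleteSpace E] {f : E → ℝ} {L : ℝ}
    (hf : Differentiable ℝ f)
    (hG : ∀ a b, ‖gradient f a - gradient f b‖ ≤ L * ‖a - b‖) (x y : E) :
    f y ≤ f x + ⟪gradient f x, y - x⟫ + L / 2 * ‖y - x‖ ^ 2 := by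
  set v := y - x
  set φ : ℝ → ℝ := fun s ↦ f (x + s • v) - s * ⟪gradient f x, v⟫ - L / 2 * s ^ 2 * ‖v‖ ^ 2
  have hφ : ∀ s, HasDerivAt φ
      (⟪gradient f (x + s • v) - gradient f x, v⟫ - L * s * ‖v‖ ^ 2) s := by
    intro s
    have hline : HasDerivAt (fun s : ℝ ↦ x + s • v) v s := by
      simpa using ((hasDerivAt_id s).smul_const v).const_add x
    have hfs := (hf (x + s • v)).hasFDerivAt.comp_hasDerivAt s hline
    rw [← inner_gradient_left] at hfs
    refine ((hfs.sub ((hasDerivAt_id s).mul_const ⟪gradient f x, v⟫)).sub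
      (((hasDerivAt_pow 2 s).const_mul (L / 2)).mul_const (‖v‖ ^ 2))).congr_deriv ?_
    simp only [inner_sub_left, Nat.cast_ofNat]
    ring
  have hanti : AntitoneOn φ (Set.Icc 0 1) := by
    refine antitoneOn_of_hasDerivWithinAt_nonpos (convex_Icc 0 1)
      (fun s _ ↦ (hφ s).continuousAt.continuousWithinAt) (fun s _ ↦ (hφ s).hasDerivWithinAt) ?_
    rw [interior_Icc]
    rintro s ⟨hs, -⟩
    have hlip : ‖gradient f (x + s • v) - gradient f x‖ ≤ L * s * ‖v‖ := by
      simpa [norm_smul, abs_of_pos hs, mul_assoc] using hG (x + s • v) x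
    nlinarith [real_inner_le_norm (gradient f (x + s • v) - gradient f x) v, norm_nonneg v]
  have hφ01 := hanti (Set.left_mem_Icc.2 zero_le_one) (Set.right_mem_Icc.2 zero_le_one) zero_le_one
  simp only [φ, zero_smul, add_zero, one_smul, zero_mul, sub_zero, one_pow, mul_one, one_mul,
    ne_eq, OfNat.ofNat_ne_zero, not_false_eq_true, zero_pow] at hφ01
  rw [show x + v = y by simp [v]] at hφ01
  linarith

theorem two_mul_sub_le_norm_gradient_sq [CompleteSpace E] {f : E → ℝ} {μ : ℝ} (hμ : 0 < μ)
    (hstrong : ∀ x y, f y - f x ≥ ⟪y - x, gradient f x⟫ + μ / 2 * ‖y - x‖ ^ 2) (z w : E) :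
    2 * μ * (f z - f w) ≤ ‖gradient f z‖ ^ 2 := by
  have hinner := neg_le_of_abs_le (abs_real_inner_le_norm (w - z) (gradient f z))
  nlinarith [hstrong z w, sq_nonneg (μ * ‖w - z‖ - ‖gradient f z‖)]

theorem le_of_strongly_convex_of_lipschitz_gradient [CompleteSpace E] [Nontrivial E] {f : E → ℝ}
    {L μ : ℝ}
    (hstrong : ∀ x y, f y - f x ≥ ⟪y - x, gradient f x⟫ + μ / 2 * ‖y - x‖ ^ 2)
    (hG : ∀ a b, ‖gradient f a - gradient f b‖ ≤ L * ‖a - b‖) : μ ≤ L := by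
  obtain ⟨v, hv⟩ := exists_ne (0 : E)
  have hmono : μ * ‖v‖ ^ 2 ≤ ⟪v, gradient f v - gradient f 0⟫ := by
    have h1 := hstrong 0 v
    have h2 := hstrong v 0
    simp only [sub_zero, zero_sub, inner_neg_left, norm_neg] at h1 h2
    rw [inner_sub_right]
    linarith
  have hlip : ⟪v, gradient f v - gradient f 0⟫ ≤ L * ‖v‖ ^ 2 := by
    have := hG v 0
    rw [sub_zero] at this
    nlinarith [real_inner_le_norm v (gradient f v - gradient f 0), norm_nonneg v]
  exact le_of_mul_le_mul_right (hmono.trans hlip) (by positivity)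

theorem le_sub_of_norm_sub_gradient_step_le [CompleteSpace E] {F : E → ℝ} {L : ℝ} (hL : 0 < L)
    (hF : Differentiable ℝ F) (hG : ∀ a b, ‖gradient F a - gradient F b‖ ≤ L * ‖a - b‖) {p z : E}
    (hz : ‖z - (p - (1 / (6 * L)) • gradient F p)‖ ≤ ‖gradient F p‖ / (30 * L)) :
    F z ≤ F p - ‖gradient F p‖ ^ 2 / (12 * L) := by
  set g := gradient F p
  set e := z - (p - (1 / (6 * L)) • g)
  have hzp : z - p = e - (1 / (6 * L)) • g := by simp only [e]; abel
  have hinner : ⟪g, z - p⟫ ≤ -(2 / 15) * (‖g‖ ^ 2 / L) := by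
    have hge : ⟪g, e⟫ ≤ ‖g‖ * (‖g‖ / (30 * L)) :=
      (real_inner_le_norm g e).trans (by gcongr)
    rw [hzp, inner_sub_right, real_inner_smul_right, real_inner_self_eq_norm_sq]
    calc ⟪g, e⟫ - 1 / (6 * L) * ‖g‖ ^ 2 ≤ ‖g‖ * (‖g‖ / (30 * L)) - 1 / (6 * L) * ‖g‖ ^ 2 := by
          gcongr
      _ = -(2 / 15) * (‖g‖ ^ 2 / L) := by field_simp; ring
  have hnorm : ‖z - p‖ ≤ ‖g‖ / (5 * L) := by
    rw [hzp]
    calc ‖e - (1 / (6 * L)) • g‖ ≤ ‖g‖ / (30 * L) + 1 / (6 * L) * ‖g‖ := by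
          refine (norm_sub_le _ _).trans ?_
          rw [norm_smul, Real.norm_of_nonneg (by positivity)]
          gcongr
      _ = ‖g‖ / (5 * L) := by field_simp; ring
  have hquad : L / 2 * ‖z - p‖ ^ 2 ≤ (1 / 50) * (‖g‖ ^ 2 / L) := by
    calc L / 2 * ‖z - p‖ ^ 2 ≤ L / 2 * (‖g‖ / (5 * L)) ^ 2 := by gcongr
      _ = (1 / 50) * (‖g‖ ^ 2 / L) := by field_simp; ring
  have hdescent := le_add_inner_gradient_add_sq_of_lipschitz hF hG p z
  have hsplit : ‖g‖ ^ 2 / (12 * L) = (1 / 12) * (‖g‖ ^ 2 / L) := by field_simp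
  have hnonneg : 0 ≤ ‖g‖ ^ 2 / L := by positivity
  linarith

theorem sub_le_mul_sub_of_norm_sub_gradient_step_le [CompleteSpace E] {F : E → ℝ} {L μ : ℝ}
    (hL : 0 < L) (hμ : 0 < μ) (hF : Differentiable ℝ F)
    (hG : ∀ a b, ‖gradient F a - gradient F b‖ ≤ L * ‖a - b‖)
    (hstrong : ∀ x y, F y - F x ≥ ⟪y - x, gradient F x⟫ + μ / 2 * ‖y - x‖ ^ 2) {p z : E}
    (hz : ‖z - (p - (1 / (6 * L)) • gradient F p)‖ ≤ ‖gradient F p‖ / (30 * L)) (w : E) :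
    F z - F w ≤ (1 - μ / (6 * L)) * (F p - F w) := by
  have hdecrease := le_sub_of_norm_sub_gradient_step_le hL hF hG hz
  have hPL : 2 * μ * (F p - F w) / (12 * L) ≤ ‖gradient F p‖ ^ 2 / (12 * L) := by
    gcongr
    exact two_mul_sub_le_norm_gradient_sq hμ hstrong p w
  have hrate : (1 - μ / (6 * L)) * (F p - F w) = F p - F w - 2 * μ * (F p - F w) / (12 * L) := by
    field_simp
    ring
  linarith

section Average

variable {ι : Type*} [Fintype ι]

theorem norm_average_sub_le [Nonempty ι] {z : ι → E} {q : E} {r : ℝ} (hz : ∀ i, ‖z i - q‖ ≤ r) :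
    ‖(1 / (Fintype.card ι : ℝ)) • ∑ i, z i - q‖ ≤ r := by
  have hmem := (convex_closedBall q r).sum_mem (t := (univ : Finset ι))
    (w := fun _ ↦ 1 / (Fintype.card ι : ℝ)) (fun _ _ ↦ by positivity)
    (by simp [Fintype.card_ne_zero]) (fun i _ ↦ by simpa [dist_eq_norm] using hz i)
  simpa [dist_eq_norm, ← smul_sum] using hmem

variable [CompleteSpace E] {f : ι → E → ℝ} {F : E → ℝ}

theorem hasGradientAt_of_eq_average (hF : ∀ z, F z = (1 / (Fintype.card ι : ℝ)) * ∑ i, f i z)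
    (hf : ∀ i, Differentiable ℝ (f i)) (z : E) :
    HasGradientAt F ((1 / (Fintype.card ι : ℝ)) • ∑ i, gradient (f i) z) z := by
  rw [funext hF, hasGradientAt_iff_hasFDerivAt, map_smul, map_sum]
  simp only [toDual_gradient]
  exact (HasFDerivAt.fun_sum fun i _ ↦ (hf i z).hasFDerivAt).const_mul _

theorem norm_gradient_sub_le_of_eq_average [Nonempty ι]
    (hF : ∀ z, F z = (1 / (Fintype.card ι : ℝ)) * ∑ i, f i z) (hf : ∀ i, Differentiable ℝ (f i))
    {L : ℝ} (hG : ∀ i a b, ‖gradient (f i) a - gradient (f i) b‖ ≤ L * ‖a - b‖) (a b : E) :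
    ‖gradient F a - gradient F b‖ ≤ L * ‖a - b‖ := by
  rw [(hasGradientAt_of_eq_average hF hf a).gradient,
    (hasGradientAt_of_eq_average hF hf b).gradient,
    ← smul_sub, ← sum_sub_distrib]
  simpa only [sub_zero] using norm_average_sub_le (q := (0 : E)) fun i ↦ by simpa using hG i a b

theorem strongly_convex_of_eq_average [Nonempty ι]
    (hF : ∀ z, F z = (1 / (Fintype.card ι : ℝ)) * ∑ i, f i z) (hf : ∀ i, Differentiable ℝ (f i))
    {μ : ℝ}
    (hstrong : ∀ i x y, f i y - f i x ≥ ⟪y - x, gradient (f i) x⟫ + μ / 2 * ‖y - x‖ ^ 2) (x y : E) :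
    F y - F x ≥ ⟪y - x, gradient F x⟫ + μ / 2 * ‖y - x‖ ^ 2 := by
  have hsum : ∑ i, (⟪y - x, gradient (f i) x⟫ + μ / 2 * ‖y - x‖ ^ 2) ≤ ∑ i, (f i y - f i x) :=
    sum_le_sum fun i _ ↦ hstrong i x y
  rw [sum_add_distrib, sum_const, card_univ, nsmul_eq_mul] at hsum
  have hcard : (Fintype.card ι : ℝ) ≠ 0 := by simp [Fintype.card_ne_zero]
  rw [(hasGradientAt_of_eq_average hF hf x).gradient, hF, hF, ← mul_sub, ← sum_sub_distrib,
    inner_smul_right, inner_sum]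
  calc (1 / (Fintype.card ι : ℝ)) * ∑ i, ⟪y - x, gradient (f i) x⟫ + μ / 2 * ‖y - x‖ ^ 2
      = 1 / (Fintype.card ι : ℝ) * (∑ i, ⟪y - x, gradient (f i) x⟫
          + Fintype.card ι * (μ / 2 * ‖y - x‖ ^ 2)) := by field_simp
    _ ≤ 1 / (Fintype.card ι : ℝ) * ∑ i, (f i y - f i x) := by gcongr

end Average

section LocalSteps

variable {G : E → E} {p g : E} {η L : ℝ} {y : ℕ → E}

theorem local_iterate_eq (hy0 : y 0 = p) (k : ℕ)
    (hy : ∀ ℓ < k, y (ℓ + 1) = y ℓ - η • (G (y ℓ) - G p + g)) :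
    y k = p - (k * η) • g - η • ∑ ℓ ∈ range k, (G (y ℓ) - G p) := by
  induction k with
  | zero => simp [hy0]
  | succ k ih =>
    rw [sum_range_succ, hy k (lt_add_one k), ih fun ℓ hℓ ↦ hy ℓ (hℓ.trans (lt_add_one k))]
    push_cast
    simp only [smul_add, add_smul, add_mul, one_mul]
    abel

theorem mul_norm_local_iterate_sub_le (hL : 0 ≤ L) (hη : 0 ≤ η)
    (hG : ∀ a b, ‖G a - G b‖ ≤ L * ‖a - b‖) (hy0 : y 0 = p) (k : ℕ)
    (hy : ∀ ℓ < k, y (ℓ + 1) = y ℓ - η • (G (y ℓ) - G p + g)) :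
    L * ‖y k - p‖ ≤ ((1 + η * L) ^ k - 1) * ‖g‖ := by
  induction k with
  | zero => simp [hy0]
  | succ k ih =>
    have ih := ih fun ℓ hℓ ↦ hy ℓ (hℓ.trans (lt_add_one k))
    have hstep : ‖y (k + 1) - p‖ ≤ ‖y k - p‖ + η * (L * ‖y k - p‖ + ‖g‖) := by
      rw [hy k (lt_add_one k), sub_right_comm]
      refine (norm_sub_le _ _).trans ?_
      rw [norm_smul, Real.norm_of_nonneg hη]
      gcongr
      exact (norm_add_le _ _).trans (by gcongr; exact hG _ _)
    calc L * ‖y (k + 1) - p‖ ≤ L * (‖y k - p‖ + η * (L * ‖y k - p‖ + ‖g‖)) := by gcongr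
      _ = (1 + η * L) * (L * ‖y k - p‖) + η * L * ‖g‖ := by ring
      _ ≤ (1 + η * L) * (((1 + η * L) ^ k - 1) * ‖g‖) + η * L * ‖g‖ := by gcongr
      _ = ((1 + η * L) ^ (k + 1) - 1) * ‖g‖ := by ring

theorem norm_local_iterate_sub_le (hL : 0 ≤ L) (hη : 0 ≤ η)
    (hG : ∀ a b, ‖G a - G b‖ ≤ L * ‖a - b‖) (hy0 : y 0 = p) (τ : ℕ)
    (hy : ∀ ℓ < τ, y (ℓ + 1) = y ℓ - η • (G (y ℓ) - G p + g)) :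
    ‖y τ - (p - (τ * η) • g)‖ ≤ τ * η * ((1 + η * L) ^ τ - 1) * ‖g‖ := by
  rw [local_iterate_eq hy0 τ hy, sub_sub_cancel_left, norm_neg, norm_smul, Real.norm_of_nonneg hη]
  calc η * ‖∑ ℓ ∈ range τ, (G (y ℓ) - G p)‖
      ≤ η * ∑ _ℓ ∈ range τ, ((1 + η * L) ^ τ - 1) * ‖g‖ := by
        gcongr
        refine norm_sum_le_of_le _ fun ℓ hℓ ↦ ?_
        have hℓ : ℓ < τ := mem_range.1 hℓ
        calc ‖G (y ℓ) - G p‖ ≤ L * ‖y ℓ - p‖ := hG _ _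
          _ ≤ ((1 + η * L) ^ ℓ - 1) * ‖g‖ :=
            mul_norm_local_iterate_sub_le hL hη hG hy0 ℓ fun j hj ↦ hy j (hj.trans hℓ)
          _ ≤ ((1 + η * L) ^ τ - 1) * ‖g‖ := by
            gcongr
            exact le_add_of_nonneg_right (by positivity)
    _ = τ * η * ((1 + η * L) ^ τ - 1) * ‖g‖ := by
      rw [sum_const, card_range, nsmul_eq_mul]
      ring

theorem one_add_one_div_six_mul_pow_le (n : ℕ) : (1 + 1 / (6 * n : ℝ)) ^ n ≤ 6 / 5 := by
  calc (1 + 1 / (6 * n : ℝ)) ^ n ≤ Real.exp (1 / (6 * n)) ^ n := by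
        gcongr
        linarith [Real.add_one_le_exp (1 / (6 * n : ℝ))]
    _ = Real.exp (n * (1 / (6 * n))) := by rw [← Real.exp_nat_mul]
    _ ≤ Real.exp (1 / 6) := by
        gcongr
        rw [mul_one_div]
        exact div_le_of_le_mul₀ (by positivity) (by norm_num) (by linarith)
    _ ≤ 1 / (1 - 1 / 6) := Real.exp_bound_div_one_sub_of_interval (by norm_num) (by norm_num)
    _ = 6 / 5 := by norm_num

theorem norm_local_iterate_sub_gradient_step_le (hL : 0 < L) {τ : ℕ} (hτ : 1 ≤ τ)
    (hη : η = 1 / (6 * L * τ)) (hG : ∀ a b, ‖G a - G b‖ ≤ L * ‖a - b‖) (hy0 : y 0 = p)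
    (hy : ∀ ℓ < τ, y (ℓ + 1) = y ℓ - η • (G (y ℓ) - G p + g)) :
    ‖y τ - (p - (1 / (6 * L)) • g)‖ ≤ ‖g‖ / (30 * L) := by
  have hτ0 : (τ : ℝ) ≠ 0 := by positivity
  have hητ : τ * η = 1 / (6 * L) := by rw [hη]; field_simp
  have hηL : η * L = 1 / (6 * τ) := by rw [hη]; field_simp
  have hbound := norm_local_iterate_sub_le hL.le (by rw [hη]; positivity) hG hy0 τ hy
  rw [hητ, hηL] at hbound
  calc _ ≤ 1 / (6 * L) * ((1 + 1 / (6 * τ)) ^ τ - 1) * ‖g‖ := hbound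
    _ ≤ 1 / (6 * L) * (6 / 5 - 1) * ‖g‖ := by gcongr; exact one_add_one_div_six_mul_pow_le τ
    _ = ‖g‖ / (30 * L) := by field_simp; ring

end LocalSteps

end InnerProductSpace

theorem fedlin_linear_convergence_systems_heterogeneity_general {d m : ℕ} (hm : 0 < m)
    (f : Fin m → EuclideanSpace ℝ (Fin d) → ℝ)
    (F : EuclideanSpace ℝ (Fin d) → ℝ)
    (hF : ∀ z, F z = (1 / (m : ℝ)) * ∑ i, f i z)
    (L μ : ℝ) (hL : 0 < L) (hμ : 0 < μ)
    (hdiff : ∀ i, Differentiable ℝ (f i))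
    (hsmooth : ∀ i, LipschitzWith L.toNNReal (gradient (f i)))
    (hstrong : ∀ i, ∀ x y : EuclideanSpace ℝ (Fin d),
      f i y - f i x ≥ ⟪y - x, gradient (f i) x⟫ + μ / 2 * ‖y - x‖ ^ 2)
    (τ : Fin m → ℕ) (hτ : ∀ i, 1 ≤ τ i)
    (η : Fin m → ℝ) (hη : ∀ i, η i = 1 / (6 * L * (τ i : ℝ)))
    (xbar : ℕ → EuclideanSpace ℝ (Fin d))
    (x : ℕ → Fin m → ℕ → EuclideanSpace ℝ (Fin d))
    (hx0 : ∀ t, 1 ≤ t → ∀ i, x t i 0 = xbar t)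
    (hrec : ∀ t, 1 ≤ t → ∀ i, ∀ ℓ < τ i, x t i (ℓ + 1) =
      x t i ℓ - η i • (gradient (f i) (x t i ℓ) - gradient (f i) (xbar t)
        + gradient F (xbar t)))
    (havg : ∀ t, 1 ≤ t → xbar (t + 1) = (1 / (m : ℝ)) • ∑ i, x t i (τ i))
    (xstar : EuclideanSpace ℝ (Fin d))
    (T : ℕ) :
    F (xbar (T + 1)) - F xstar ≤
      (1 - 1 / (6 * (L / μ))) ^ T * (F (xbar 1) - F xstar) := by
  rcases subsingleton_or_nontrivial (EuclideanSpace ℝ (Fin d)) with hE | hE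
  · simp [Subsingleton.elim (xbar (T + 1)) xstar, Subsingleton.elim (xbar 1) xstar]
  have : Nonempty (Fin m) := ⟨⟨0, hm⟩⟩
  have hF' : ∀ z, F z = (1 / (Fintype.card (Fin m) : ℝ)) * ∑ i, f i z := by simpa using hF
  have hG : ∀ i a b, ‖gradient (f i) a - gradient (f i) b‖ ≤ L * ‖a - b‖ := fun i a b ↦ by
    simpa [dist_eq_norm, Real.coe_toNNReal L hL.le] using (hsmooth i).dist_le_mul a b
  have hFdiff : Differentiable ℝ F := fun z ↦
    (hasGradientAt_of_eq_average hF' hdiff z).differentiableAt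
  have hFG := norm_gradient_sub_le_of_eq_average hF' hdiff hG
  have hFstrong := strongly_convex_of_eq_average hF' hdiff hstrong
  have hround : ∀ t, 1 ≤ t →
      F (xbar (t + 1)) - F xstar ≤ (1 - μ / (6 * L)) * (F (xbar t) - F xstar) := by
    intro t ht
    refine sub_le_mul_sub_of_norm_sub_gradient_step_le hL hμ hFdiff hFG hFstrong ?_ xstar
    have hclients := norm_average_sub_le fun i ↦ norm_local_iterate_sub_gradient_step_le hL
      (hτ i) (hη i) (hG i) (hx0 t ht i) (hrec t ht i)
    rwa [Fintype.card_fin, ← havg t ht] at hclients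
  have hμL := le_of_strongly_convex_of_lipschitz_gradient hFstrong hFG
  have hrate : 1 - 1 / (6 * (L / μ)) = 1 - μ / (6 * L) := by field_simp
  rw [hrate]
  have hrate_nonneg : 0 ≤ 1 - μ / (6 * L) := by
    rw [sub_nonneg, div_le_one (by positivity)]
    linarith
  exact le_geom (u := fun t ↦ F (xbar (t + 1)) - F xstar) hrate_nonneg T
    fun k _ ↦ hround (k + 1) le_add_self

/-- Theorem 3 (strongly convex case with systems heterogeneity): FedLin with
client-specific numbers of local steps `τᵢ ≥ 1` and step sizes `ηᵢ = 1/(6Lτᵢ)`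
converges linearly to the global minimum at a rate independent of the `τᵢ`. -/
theorem fedlin_linear_convergence_systems_heterogeneity {d m : ℕ} (hm : 0 < m)
    (f : Fin m → EuclideanSpace ℝ (Fin d) → ℝ)
    (F : EuclideanSpace ℝ (Fin d) → ℝ)
    (hF : ∀ z, F z = (1 / (m : ℝ)) * ∑ i, f i z)
    (L μ : ℝ) (hL : 0 < L) (hμ : 0 < μ)
    (hdiff : ∀ i, Differentiable ℝ (f i))
    (hsmooth : ∀ i, LipschitzWith L.toNNReal (gradient (f i)))
    (hstrong : ∀ i, ∀ x y : EuclideanSpace ℝ (Fin d),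
      f i y - f i x ≥ ⟪y - x, gradient (f i) x⟫ + μ / 2 * ‖y - x‖ ^ 2)
    (τ : Fin m → ℕ) (hτ : ∀ i, 1 ≤ τ i)
    (η : Fin m → ℝ) (hη : ∀ i, η i = 1 / (6 * L * (τ i : ℝ)))
    (xbar : ℕ → EuclideanSpace ℝ (Fin d))
    (x : ℕ → Fin m → ℕ → EuclideanSpace ℝ (Fin d))
    (hx0 : ∀ t, 1 ≤ t → ∀ i, x t i 0 = xbar t)
    (hrec : ∀ t, 1 ≤ t → ∀ i, ∀ ℓ < τ i, x t i (ℓ + 1) =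
      x t i ℓ - η i • (gradient (f i) (x t i ℓ) - gradient (f i) (xbar t)
        + gradient F (xbar t)))
    (havg : ∀ t, 1 ≤ t → xbar (t + 1) = (1 / (m : ℝ)) • ∑ i, x t i (τ i))
    (xstar : EuclideanSpace ℝ (Fin d)) (hmin : ∀ z, F xstar ≤ F z)
    (T : ℕ) :
    F (xbar (T + 1)) - F xstar ≤
      (1 - 1 / (6 * (L / μ))) ^ T * (F (xbar 1) - F xstar) :=
  fedlin_linear_convergence_systems_heterogeneity_general hm f F hF L μ hL hμ hdiff hsmooth hstrong
    τ hτ η hη xbar x hx0 hrec havg xstar T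
end

section
/- Consider the two-client scalar instance f₁(x) = (1/2)(x-3)², f₂(x) = (x-50)², with f = (f₁+f₂)/2, and FedProx updates with both clients performing 2 local steps per round. For any step size 0 < η < 1/(2+β), the fixed point x̃* of FedProx satisfies |x̃* - x*| = 94η / (3(6 - η(5 + 3β))), where x* = argmin f; in particular the error is strictly positive for every fixed η > 0 and tends to 0 as η → 0. -/
/-!
Both clients are quadratic, so each local step is affine and two local steps from `x̄` move it
to `x̄ - η a (2 - η (a + β)) (x̄ - c)` for the client `x ↦ (a/2)(x - c)²`. Averaging the two
clients, the round map is `x̄ ↦ x̄ - (η/2)(D x̄ - N)` with `D = 6 - η(5 + 3β) > 0`, whose only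
fixed point is `N / D`; comparing it with `103/3` gives the error `94η / (3D)`.
-/

open Filter Topology

/-- One local FedProx step of a client with objective `g`, anchored at the server iterate `xb`. -/
noncomputable def proxStep (η β : ℝ) (g : ℝ → ℝ) (xb y : ℝ) : ℝ :=
  y - η * (deriv g y + β * (y - xb))

theorem proxStep_proxStep_of_deriv_eq {η β a c : ℝ} {g : ℝ → ℝ}
    (hg : ∀ y, deriv g y = a * (y - c)) (xb : ℝ) :
    proxStep η β g xb (proxStep η β g xb xb) = xb - η * a * (2 - η * (a + β)) * (xb - c) := by
  simp only [proxStep, hg]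
  ring

theorem hasDerivAt_sub_sq (c y : ℝ) : HasDerivAt (fun x : ℝ => (x - c) ^ 2) (2 * (y - c)) y := by
  have h : HasDerivAt (fun x : ℝ => (x - c) ^ 2) (2 * (y - c) ^ 1 * 1) y :=
    ((hasDerivAt_id y).sub_const c).pow 2
  simpa using h

theorem sub_mul_sub_eq_self_iff {K : Type*} [Field K] {k d b x : K} (hk : k ≠ 0) (hd : d ≠ 0) :
    x - k * (d * x - b) = x ↔ x = b / d := by
  rw [sub_eq_self, mul_eq_zero, or_iff_right hk, sub_eq_zero, eq_div_iff hd, mul_comm]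

theorem tendsto_mul_div_mul_sub_nhds_zero (a b c d : ℝ) (h : b * c ≠ 0) :
    Tendsto (fun s : ℝ => a * s / (b * (c - s * d))) (𝓝 0) (𝓝 0) := by
  have hcont : ContinuousAt (fun s : ℝ => a * s / (b * (c - s * d))) 0 :=
    ContinuousAt.div (by fun_prop) (by fun_prop) (by simpa using h)
  simpa using hcont.tendsto

theorem fedprox_fixed_point_error_general (β : ℝ)
    (η : ℝ) (hη : 0 < η) (hη' : η < 1 / (2 + β))
    (f₁ f₂ : ℝ → ℝ)
    (hf₁ : ∀ x, f₁ x = (1 / 2) * (x - 3) ^ 2)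
    (hf₂ : ∀ x, f₂ x = (x - 50) ^ 2)
    (step : (ℝ → ℝ) → ℝ → ℝ → ℝ)
    (hstep : ∀ g xb y, step g xb y = y - η * (deriv g y + β * (y - xb)))
    (Φ : ℝ → ℝ)
    (hΦ : ∀ xb, Φ xb =
      (step f₁ xb (step f₁ xb xb) + step f₂ xb (step f₂ xb xb)) / 2) :
    (∃! xt : ℝ, Φ xt = xt) ∧
    (∀ xt : ℝ, Φ xt = xt →
      |xt - 103 / 3| = 94 * η / (3 * (6 - η * (5 + 3 * β)))) ∧
    0 < 94 * η / (3 * (6 - η * (5 + 3 * β))) ∧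
    Tendsto (fun s : ℝ => 94 * s / (3 * (6 - s * (5 + 3 * β))))
      (nhdsWithin 0 (Set.Ioi 0)) (nhds 0) := by
  have h2β : 0 < 2 + β := by
    by_contra! h
    linarith [one_div_nonpos.mpr h]
  have hηβ : η * (2 + β) < 1 := (lt_div_iff₀ h2β).mp hη'
  have hD : 0 < 6 - η * (5 + 3 * β) := by linarith
  have hstep' : step = proxStep η β := by
    funext g xb y
    exact hstep g xb y
  have hderiv₁ : ∀ y, deriv f₁ y = 1 * (y - 3) := fun y => by
    rw [funext hf₁, ((hasDerivAt_sub_sq 3 y).const_mul (1 / 2)).deriv]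
    ring
  have hderiv₂ : ∀ y, deriv f₂ y = 2 * (y - 50) := fun y => by
    rw [funext hf₂, (hasDerivAt_sub_sq 50 y).deriv]
  have hΦ_affine : ∀ x, Φ x =
      x - η / 2 * ((6 - η * (5 + 3 * β)) * x - (206 - η * (203 + 103 * β))) := fun x => by
    rw [hΦ, hstep', proxStep_proxStep_of_deriv_eq hderiv₁, proxStep_proxStep_of_deriv_eq hderiv₂]
    ring
  have hfixed : ∀ x, Φ x = x ↔ x = (206 - η * (203 + 103 * β)) / (6 - η * (5 + 3 * β)) :=
    fun x => by rw [hΦ_affine]; exact sub_mul_sub_eq_self_iff (by positivity) hD.ne'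
  refine ⟨⟨_, (hfixed _).2 rfl, fun x hx => (hfixed x).1 hx⟩, fun x hx => ?_, by positivity,
    (tendsto_mul_div_mul_sub_nhds_zero _ _ _ _ (by norm_num)).mono_left nhdsWithin_le_nhds⟩
  have herr : 103 / 3 - (206 - η * (203 + 103 * β)) / (6 - η * (5 + 3 * β)) =
      94 * η / (3 * (6 - η * (5 + 3 * β))) := by
    field_simp
    ring
  rw [(hfixed x).1 hx, abs_sub_comm, herr, abs_of_pos (by positivity)]

/-- For the two-client scalar instance `f₁(x) = (1/2)(x-3)²`, `f₂(x) = (x-50)²`, two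
local FedProx steps per round, and any step size `0 < η < 1/(2+β)`: the FedProx round
map has a unique fixed point `x̃*`, it satisfies
`|x̃* - x*| = 94η/(3(6 - η(5 + 3β)))` where `x* = 103/3 = argmin f`, this error is
strictly positive, and it tends to `0` as `η → 0⁺`. -/
theorem fedprox_fixed_point_error (β : ℝ) (hβ : 0 ≤ β)
    (η : ℝ) (hη : 0 < η) (hη' : η < 1 / (2 + β))
    (f₁ f₂ : ℝ → ℝ)
    (hf₁ : ∀ x, f₁ x = (1 / 2) * (x - 3) ^ 2)
    (hf₂ : ∀ x, f₂ x = (x - 50) ^ 2)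
    (step : (ℝ → ℝ) → ℝ → ℝ → ℝ)
    (hstep : ∀ g xb y, step g xb y = y - η * (deriv g y + β * (y - xb)))
    (Φ : ℝ → ℝ)
    (hΦ : ∀ xb, Φ xb =
      (step f₁ xb (step f₁ xb xb) + step f₂ xb (step f₂ xb xb)) / 2) :
    (∃! xt : ℝ, Φ xt = xt) ∧
    (∀ xt : ℝ, Φ xt = xt →
      |xt - 103 / 3| = 94 * η / (3 * (6 - η * (5 + 3 * β)))) ∧
    0 < 94 * η / (3 * (6 - η * (5 + 3 * β))) ∧
    Tendsto (fun s : ℝ => 94 * s / (3 * (6 - s * (5 + 3 * β))))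
      (nhdsWithin 0 (Set.Ioi 0)) (nhds 0) :=
  fedprox_fixed_point_error_general β η hη hη' f₁ f₂ hf₁ hf₂ step hstep Φ hΦ
end

section
/- Consider m clients with quadratic objectives f_i(x) = (1/2)‖A_i^{1/2}(x - c_i)‖² where each A_i is symmetric positive definite. For any η > 0 and β ≥ 0, one round of FedProx (each client performs H local proximal-gradient steps x_{i,ℓ+1} = x_{i,ℓ} - η(∇f_i(x_{i,ℓ}) + β(x_{i,ℓ} - x̄_t)), x_{i,0} = x̄_t, followed by averaging x̄_{t+1} = (1/m)∑ x_{i,H}) equals one step of gradient descent with step size η on the surrogate function f̃(x) = (1/m)∑_i (1/2)(x - c_i)'Q_iA_i(x - c_i), where Q_i = ∑_{ℓ=0}^{H-1}(I - η(A_i + βI))^ℓ. -/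
/-!
Each local step is affine, so the proximal residual `gₗ = ∇fᵢ(xₗ) + β(xₗ - x̄)` obeys the
linear recursion `gₗ₊₁ = (I - η(Aᵢ + βI)) gₗ` with `g₀ = Aᵢ(x̄ - cᵢ)`. Hence the client moves by
`-η ∑ₗ gₗ = -η QᵢAᵢ(x̄ - cᵢ)`. Since `Qᵢ` is a polynomial in the symmetric `Aᵢ`, the product
`QᵢAᵢ` is symmetric, so `QᵢAᵢ(x - cᵢ)` is the gradient of the surrogate's `i`-th term, and
averaging the clients gives one gradient step on `f̃`.
-/

open Finset RealInnerProductSpace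

section Gradient

variable {E : Type*} [NormedAddCommGroup E] [InnerProductSpace ℝ E] [CompleteSpace E]

theorem HasGradientAt.const_mul {f : E → ℝ} {f' x : E} (hf : HasGradientAt f f' x) (a : ℝ) :
    HasGradientAt (fun y => a * f y) (a • f') x := by
  rw [hasGradientAt_iff_hasFDerivAt] at hf ⊢
  simpa only [map_smul] using hf.const_mul a

theorem HasGradientAt.fun_sum {ι : Type*} (s : Finset ι) {f : ι → E → ℝ} {f' : ι → E} {x : E}
    (hf : ∀ i ∈ s, HasGradientAt (f i) (f' i) x) :
    HasGradientAt (fun y => ∑ i ∈ s, f i y) (∑ i ∈ s, f' i) x := by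
  simp only [hasGradientAt_iff_hasFDerivAt, map_sum] at hf ⊢
  exact HasFDerivAt.fun_sum hf

theorem LinearMap.IsSymmetric.hasGradientAt_half_inner_sub {T : E →ₗ[ℝ] E} (hT : T.IsSymmetric)
    (c y : E) :
    HasGradientAt (fun x => (1 / 2) * ⟪T (x - c), x - c⟫) (T (y - c)) y := by
  let S : E →L[ℝ] E := ⟨T, hT.continuous⟩
  have hsub : HasFDerivAt (fun x : E => x - c) (ContinuousLinearMap.id ℝ E) y :=
    (hasFDerivAt_id y).sub_const c
  have hinner := ((S.hasFDerivAt.comp y hsub).inner ℝ hsub).const_mul (1 / 2 : ℝ)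
  rw [hasGradientAt_iff_hasFDerivAt]
  refine hinner.congr_fderiv (ContinuousLinearMap.ext fun h => ?_)
  have hsymm : ⟪T h, y - c⟫ = ⟪T (y - c), h⟫ := by rw [hT, real_inner_comm]
  simp only [FunLike.coe_smul, Pi.smul_apply, ContinuousLinearMap.coe_comp,
    Function.comp_apply, ContinuousLinearMap.prod_apply, ContinuousLinearMap.coe_id', id_eq,
    fderivInnerCLM_apply, InnerProductSpace.toDual_apply_apply, smul_eq_mul, S,
    ContinuousLinearMap.coe_mk', hsymm]
  ring

end Gradient

section LocalSteps

variable {R M : Type*} [CommRing R] [AddCommGroup M] [Module R M]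

theorem Module.End.eq_sub_smul_geom_sum_mul_of_proximal_steps (T : Module.End R M) (η β : R)
    (c xbar : M) (H : ℕ) (x : ℕ → M) (hx0 : x 0 = xbar)
    (hrec : ∀ ℓ < H, x (ℓ + 1) = x ℓ - η • (T (x ℓ - c) + β • (x ℓ - xbar))) :
    x H = xbar - η • ((∑ ℓ ∈ range H, (1 - η • (T + β • 1)) ^ ℓ) * T) (xbar - c) := by
  set B := 1 - η • (T + β • 1)
  set g : ℕ → M := fun ℓ => T (x ℓ - c) + β • (x ℓ - xbar)
  have hg : ∀ ℓ ≤ H, g ℓ = (B ^ ℓ) (T (xbar - c)) := by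
    intro ℓ hℓ
    induction ℓ with
    | zero => simp [g, hx0]
    | succ ℓ ih =>
      have hstep : g (ℓ + 1) = B (g ℓ) := by
        simp only [g, B, hrec ℓ hℓ, map_sub, map_smul, LinearMap.sub_apply, LinearMap.smul_apply,
          LinearMap.add_apply, Module.End.one_apply, map_add]
        module
      rw [hstep, ih (by omega), pow_succ', Module.End.mul_apply]
  have hx : ∀ ℓ ≤ H, x ℓ = xbar - η • ∑ k ∈ range ℓ, g k := by
    intro ℓ hℓ
    induction ℓ with
    | zero => simp [hx0]
    | succ ℓ ih =>
      rw [hrec ℓ hℓ]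
      change x ℓ - η • g ℓ = _
      rw [ih (by omega), sum_range_succ]
      module
  rw [hx H le_rfl, sum_congr rfl fun k hk => hg k (mem_range.1 hk).le, Module.End.mul_apply,
    LinearMap.sum_apply]

end LocalSteps

theorem IsSelfAdjoint.geom_sum_mul {A : Type*} [Ring A] [StarRing A] [Algebra ℝ A]
    [StarModule ℝ A] {a : A} (ha : IsSelfAdjoint a) (η β : ℝ) (H : ℕ) :
    IsSelfAdjoint ((∑ ℓ ∈ range H, (1 - η • (a + β • 1)) ^ ℓ) * a) := by
  have hB : IsSelfAdjoint (1 - η • (a + β • 1)) :=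
    (IsSelfAdjoint.one A).sub (.smul (.all η) (ha.add (.smul (.all β) (IsSelfAdjoint.one A))))
  have hQ : IsSelfAdjoint (∑ ℓ ∈ range H, (1 - η • (a + β • 1)) ^ ℓ) :=
    isSelfAdjoint_sum _ fun ℓ _ => hB.pow ℓ
  refine (hQ.commute_iff ha).1 (Commute.sum_left _ _ _ fun ℓ _ => Commute.pow_left ?_ ℓ)
  exact ((Commute.one_left a).sub_left (((Commute.refl a).add_left
    ((Commute.one_left a).smul_left β)).smul_left η))

theorem Matrix.toEuclideanLin_geom_sum_mul {n : Type*} [Fintype n] [DecidableEq n]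
    (A : Matrix n n ℝ) (η β : ℝ) (H : ℕ) :
    Matrix.toEuclideanLin ((∑ ℓ ∈ range H, (1 - η • (A + β • 1)) ^ ℓ) * A) =
      (∑ ℓ ∈ range H, (1 - η • (Matrix.toEuclideanLin A + β • 1)) ^ ℓ) *
        Matrix.toEuclideanLin A := by
  have hAlg : ∀ M : Matrix n n ℝ,
      Matrix.toEuclideanLin M = Matrix.toLinAlgEquiv (EuclideanSpace.basisFun n ℝ).toBasis M :=
    fun _ => rfl
  simp only [hAlg, map_mul, map_sum, map_pow, map_sub, map_one, map_smul, map_add]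

theorem fedprox_round_is_gd_on_surrogate_general {d m H : ℕ} (hm : 0 < m)
    (η β : ℝ)
    (A : Fin m → Matrix (Fin d) (Fin d) ℝ)
    (hA : ∀ i, (A i).PosDef)
    (c : Fin m → EuclideanSpace ℝ (Fin d))
    (f : Fin m → EuclideanSpace ℝ (Fin d) → ℝ)
    (hf : ∀ i x, f i x = (1 / 2) * ⟪Matrix.toEuclideanLin (A i) (x - c i), x - c i⟫)
    (Q : Fin m → Matrix (Fin d) (Fin d) ℝ)
    (hQ : ∀ i, Q i = ∑ ℓ ∈ Finset.range H, (1 - η • (A i + β • 1)) ^ ℓ)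
    (ftilde : EuclideanSpace ℝ (Fin d) → ℝ)
    (hftilde : ∀ x, ftilde x = (1 / (m : ℝ)) *
      ∑ i, (1 / 2) * ⟪Matrix.toEuclideanLin (Q i * A i) (x - c i), x - c i⟫)
    (xbar : EuclideanSpace ℝ (Fin d))
    (x : Fin m → ℕ → EuclideanSpace ℝ (Fin d))
    (hx0 : ∀ i, x i 0 = xbar)
    (hrec : ∀ i, ∀ ℓ < H, x i (ℓ + 1) =
      x i ℓ - η • (gradient (f i) (x i ℓ) + β • (x i ℓ - xbar))) :
    (1 / (m : ℝ)) • ∑ i, x i H = xbar - η • gradient ftilde xbar := by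
  have hgradf : ∀ i y, gradient (f i) y = Matrix.toEuclideanLin (A i) (y - c i) := fun i y => by
    rw [funext (hf i)]
    exact ((Matrix.isSymmetric_toEuclideanLin_iff.2 (hA i).1).hasGradientAt_half_inner_sub
      (c i) y).gradient
  have hxH : ∀ i, x i H = xbar - η • Matrix.toEuclideanLin (Q i * A i) (xbar - c i) := by
    intro i
    rw [hQ i, Matrix.toEuclideanLin_geom_sum_mul]
    exact Module.End.eq_sub_smul_geom_sum_mul_of_proximal_steps _ η β (c i) xbar H (x i) (hx0 i)
      (by simpa only [hgradf] using hrec i)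
  have hgradft : gradient ftilde xbar =
      (1 / (m : ℝ)) • ∑ i, Matrix.toEuclideanLin (Q i * A i) (xbar - c i) := by
    rw [funext hftilde]
    refine ((HasGradientAt.fun_sum _ fun i _ => ?_).const_mul _).gradient
    have hQA : (Q i * A i).IsHermitian := hQ i ▸ (hA i).1.isSelfAdjoint.geom_sum_mul η β H
    exact (Matrix.isSymmetric_toEuclideanLin_iff.2 hQA).hasGradientAt_half_inner_sub _ _
  have hm' : (m : ℝ) ≠ 0 := by positivity
  simp only [hxH, hgradft, sum_sub_distrib, sum_const, card_univ, Fintype.card_fin, ← smul_sum,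
    smul_sub, ← Nat.cast_smul_eq_nsmul ℝ, smul_smul, smul_comm η]
  rw [one_div, inv_mul_cancel₀ hm', one_smul]

/-- Proposition 1: for quadratic client objectives
`fᵢ(x) = (1/2)(x - cᵢ)'Aᵢ(x - cᵢ)` with `Aᵢ` symmetric positive definite, one round of
FedProx (each client performs `H` local proximal-gradient steps followed by averaging)
equals one step of gradient descent with step size `η` on the surrogate
`f̃(x) = (1/m)∑ᵢ (1/2)(x - cᵢ)'QᵢAᵢ(x - cᵢ)`, where
`Qᵢ = ∑_{ℓ=0}^{H-1}(I - η(Aᵢ + βI))^ℓ`. -/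
theorem fedprox_round_is_gd_on_surrogate {d m H : ℕ} (hm : 0 < m)
    (η β : ℝ) (hη : 0 < η) (hβ : 0 ≤ β)
    (A : Fin m → Matrix (Fin d) (Fin d) ℝ)
    (hA : ∀ i, (A i).PosDef)
    (c : Fin m → EuclideanSpace ℝ (Fin d))
    (f : Fin m → EuclideanSpace ℝ (Fin d) → ℝ)
    (hf : ∀ i x, f i x = (1 / 2) * ⟪Matrix.toEuclideanLin (A i) (x - c i), x - c i⟫)
    (Q : Fin m → Matrix (Fin d) (Fin d) ℝ)
    (hQ : ∀ i, Q i = ∑ ℓ ∈ Finset.range H, (1 - η • (A i + β • 1)) ^ ℓ)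
    (ftilde : EuclideanSpace ℝ (Fin d) → ℝ)
    (hftilde : ∀ x, ftilde x = (1 / (m : ℝ)) *
      ∑ i, (1 / 2) * ⟪Matrix.toEuclideanLin (Q i * A i) (x - c i), x - c i⟫)
    (xbar : EuclideanSpace ℝ (Fin d))
    (x : Fin m → ℕ → EuclideanSpace ℝ (Fin d))
    (hx0 : ∀ i, x i 0 = xbar)
    (hrec : ∀ i, ∀ ℓ < H, x i (ℓ + 1) =
      x i ℓ - η • (gradient (f i) (x i ℓ) + β • (x i ℓ - xbar))) :
    (1 / (m : ℝ)) • ∑ i, x i H = xbar - η • gradient ftilde xbar :=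
  fedprox_round_is_gd_on_surrogate_general hm η β A hA c f hf Q hQ ftilde hftilde xbar x hx0 hrec
end
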